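/- Fix real numbers D > 0 and λ₂ > 0, and define g : (0, ∞) → ℝ by g(M) = 1/√λ₂ if D² > 2Mλ₂, and g(M) = 2M√λ₂/(D·√(4Mλ₂ − D²)) if D² ≤ 2Mλ₂. Then g is continuous on (0, ∞), monotonically non-decreasing, satisfies g(M) ≥ 1/√λ₂ for all M > 0, with equality g(M) = 1/√λ₂ for all M ≤ D²/(2λ₂), and g(M) > 1/√λ₂ for all M > D²/(2λ₂). -/
import Mathlib

/-- The H∞ norm of the swing dynamics with phase cohesiveness output, as a
function of the uniform inertia constant `M`:
`g(M) = 1/√λ₂` if `D² > 2Mλ₂`, and `g(M) = 2M√λ₂/(D√(4Mλ₂ − D²))` if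
`D² ≤ 2Mλ₂`. -/
noncomputable def phaseHinfOfInertia (D lam2 M : ℝ) : ℝ :=
  if D ^ 2 ≤ 2 * M * lam2 then
    2 * M * Real.sqrt lam2 / (D * Real.sqrt (4 * M * lam2 - D ^ 2))
  else 1 / Real.sqrt lam2

namespace PhaseAux

/-- The formula on the branch `D² ≤ 2Mλ₂`. -/
noncomputable def f (D lam2 x : ℝ) : ℝ :=
  2 * x * Real.sqrt lam2 / (D * Real.sqrt (4 * x * lam2 - D ^ 2))

lemma tpos {D : ℝ} (hD : 0 < D) {lam2 M : ℝ}
    (hb : D ^ 2 ≤ 2 * M * lam2) : 0 < 4 * M * lam2 - D ^ 2 := by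
  nlinarith [sq_nonneg D]

lemma key {D lam2 : ℝ} (hD : 0 < D) (hl : 0 < lam2) {M : ℝ} (hM : 0 < M)
    (hb : D ^ 2 ≤ 2 * M * lam2) :
    D * Real.sqrt (4 * M * lam2 - D ^ 2) ≤ 2 * M * lam2 := by
  have htp := tpos hD hb
  have ht : 0 < Real.sqrt (4 * M * lam2 - D ^ 2) := Real.sqrt_pos.mpr htp
  have ht2 : Real.sqrt (4 * M * lam2 - D ^ 2) ^ 2 = 4 * M * lam2 - D ^ 2 :=
    Real.sq_sqrt htp.le
  have h1 : (D * Real.sqrt (4 * M * lam2 - D ^ 2)) ^ 2 ≤ (2 * M * lam2) ^ 2 := by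
    rw [mul_pow, ht2]; nlinarith [sq_nonneg (2 * M * lam2 - D ^ 2)]
  nlinarith [h1, mul_pos hD ht, mul_pos hM hl]

lemma keylt {D lam2 : ℝ} (hD : 0 < D) (hl : 0 < lam2) {M : ℝ} (hM : 0 < M)
    (hb : D ^ 2 < 2 * M * lam2) :
    D * Real.sqrt (4 * M * lam2 - D ^ 2) < 2 * M * lam2 := by
  have htp := tpos hD hb.le
  have ht : 0 < Real.sqrt (4 * M * lam2 - D ^ 2) := Real.sqrt_pos.mpr htp
  have ht2 : Real.sqrt (4 * M * lam2 - D ^ 2) ^ 2 = 4 * M * lam2 - D ^ 2 :=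
    Real.sq_sqrt htp.le
  have h1 : (D * Real.sqrt (4 * M * lam2 - D ^ 2)) ^ 2 < (2 * M * lam2) ^ 2 := by
    rw [mul_pow, ht2]; nlinarith [sq_nonneg (2 * M * lam2 - D ^ 2)]
  nlinarith [h1, mul_pos hD ht, mul_pos hM hl]

lemma f_lb {D lam2 : ℝ} (hD : 0 < D) (hl : 0 < lam2) {M : ℝ} (hM : 0 < M)
    (hb : D ^ 2 ≤ 2 * M * lam2) :
    1 / Real.sqrt lam2 ≤ f D lam2 M := by
  have hs : 0 < Real.sqrt lam2 := Real.sqrt_pos.mpr hl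
  have hs2 : Real.sqrt lam2 * Real.sqrt lam2 = lam2 := Real.mul_self_sqrt hl.le
  have htp := tpos hD hb
  have ht : 0 < Real.sqrt (4 * M * lam2 - D ^ 2) := Real.sqrt_pos.mpr htp
  rw [f, div_le_div_iff₀ hs (by positivity)]
  have := key hD hl hM hb
  nlinarith [this, hs2]

lemma f_lb_strict {D lam2 : ℝ} (hD : 0 < D) (hl : 0 < lam2) {M : ℝ} (hM : 0 < M)
    (hb : D ^ 2 < 2 * M * lam2) :
    1 / Real.sqrt lam2 < f D lam2 M := by
  have hs : 0 < Real.sqrt lam2 := Real.sqrt_pos.mpr hl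
  have hs2 : Real.sqrt lam2 * Real.sqrt lam2 = lam2 := Real.mul_self_sqrt hl.le
  have htp := tpos hD hb.le
  have ht : 0 < Real.sqrt (4 * M * lam2 - D ^ 2) := Real.sqrt_pos.mpr htp
  rw [f, div_lt_div_iff₀ hs (by positivity)]
  have := keylt hD hl hM hb
  nlinarith [this, hs2]

lemma f_mono {D lam2 : ℝ} (hD : 0 < D) (hl : 0 < lam2) {M₁ M₂ : ℝ}
    (hM1 : 0 < M₁) (hb : D ^ 2 ≤ 2 * M₁ * lam2) (h12 : M₁ ≤ M₂) :
    f D lam2 M₁ ≤ f D lam2 M₂ := by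
  have hM2 : 0 < M₂ := hM1.trans_le h12
  have hb2 : D ^ 2 ≤ 2 * M₂ * lam2 := by nlinarith
  have hs : 0 < Real.sqrt lam2 := Real.sqrt_pos.mpr hl
  have htp1 := tpos hD hb
  have htp2 := tpos hD hb2
  have ht1 : 0 < Real.sqrt (4 * M₁ * lam2 - D ^ 2) := Real.sqrt_pos.mpr htp1
  have ht2 : 0 < Real.sqrt (4 * M₂ * lam2 - D ^ 2) := Real.sqrt_pos.mpr htp2
  have ht1sq : Real.sqrt (4 * M₁ * lam2 - D ^ 2) ^ 2 = 4 * M₁ * lam2 - D ^ 2 :=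
    Real.sq_sqrt htp1.le
  have ht2sq : Real.sqrt (4 * M₂ * lam2 - D ^ 2) ^ 2 = 4 * M₂ * lam2 - D ^ 2 :=
    Real.sq_sqrt htp2.le
  rw [f, f, div_le_div_iff₀ (by positivity) (by positivity)]
  have key : M₁ * Real.sqrt (4 * M₂ * lam2 - D ^ 2)
      ≤ M₂ * Real.sqrt (4 * M₁ * lam2 - D ^ 2) := by
    have h1 : (M₁ * Real.sqrt (4 * M₂ * lam2 - D ^ 2)) ^ 2
        ≤ (M₂ * Real.sqrt (4 * M₁ * lam2 - D ^ 2)) ^ 2 := by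
      rw [mul_pow, mul_pow, ht1sq, ht2sq]
      nlinarith [mul_nonneg (mul_nonneg (sub_nonneg.mpr h12) hM2.le) (sub_nonneg.mpr hb),
        mul_nonneg (mul_nonneg (sub_nonneg.mpr h12) hM1.le) (sub_nonneg.mpr hb2)]
    nlinarith [h1, mul_pos hM1 ht2, mul_pos hM2 ht1]
  nlinarith [mul_le_mul_of_nonneg_left key
    (by positivity : (0:ℝ) ≤ 2 * Real.sqrt lam2 * D)]

lemma f_at_boundary {D lam2 : ℝ} (hD : 0 < D) (hl : 0 < lam2) {M : ℝ}
    (heq : D ^ 2 = 2 * M * lam2) :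
    f D lam2 M = 1 / Real.sqrt lam2 := by
  have hs : 0 < Real.sqrt lam2 := Real.sqrt_pos.mpr hl
  have hs2 : Real.sqrt lam2 * Real.sqrt lam2 = lam2 := Real.mul_self_sqrt hl.le
  have h4 : 4 * M * lam2 - D ^ 2 = D ^ 2 := by linarith
  rw [f, h4, Real.sqrt_sq hD.le, div_eq_div_iff (by positivity) hs.ne']
  nlinarith

lemma g_eq_f_max {D lam2 : ℝ} (hD : 0 < D) (hl : 0 < lam2) {M : ℝ} (hM : 0 < M) :
    phaseHinfOfInertia D lam2 M = f D lam2 (max M (D ^ 2 / (2 * lam2))) := by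
  rcases le_or_gt (D ^ 2) (2 * M * lam2) with hb | hb
  · have hc : D ^ 2 / (2 * lam2) ≤ M := by
      rw [div_le_iff₀ (by positivity)]; linarith
    rw [max_eq_left hc, phaseHinfOfInertia, if_pos hb, f]
  · have hlt : M < D ^ 2 / (2 * lam2) := by
      rw [lt_div_iff₀ (by positivity)]; linarith
    rw [max_eq_right hlt.le, phaseHinfOfInertia, if_neg (not_le.mpr hb)]
    exact (f_at_boundary hD hl (by field_simp)).symm

end PhaseAux

open PhaseAux in
/-- For fixed `D > 0` and `λ₂ > 0`, the map `M ↦ g(M)` is continuous and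
monotonically non-decreasing on `(0, ∞)`, bounded below by `1/√λ₂`, equal to
`1/√λ₂` for all `0 < M ≤ D²/(2λ₂)`, and strictly greater than `1/√λ₂` for all
`M > D²/(2λ₂)`. -/
theorem phaseHinf_inertia_behavior (D lam2 : ℝ) (hD : 0 < D) (hl : 0 < lam2) :
    ContinuousOn (phaseHinfOfInertia D lam2) (Set.Ioi (0 : ℝ)) ∧
    MonotoneOn (phaseHinfOfInertia D lam2) (Set.Ioi (0 : ℝ)) ∧
    (∀ M : ℝ, 0 < M → 1 / Real.sqrt lam2 ≤ phaseHinfOfInertia D lam2 M) ∧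
    (∀ M : ℝ, 0 < M → M ≤ D ^ 2 / (2 * lam2) →
      phaseHinfOfInertia D lam2 M = 1 / Real.sqrt lam2) ∧
    (∀ M : ℝ, D ^ 2 / (2 * lam2) < M →
      1 / Real.sqrt lam2 < phaseHinfOfInertia D lam2 M) := by
  have hs : 0 < Real.sqrt lam2 := Real.sqrt_pos.mpr hl
  have hcpos : 0 < D ^ 2 / (2 * lam2) := by positivity
  have lb : ∀ M : ℝ, 0 < M → 1 / Real.sqrt lam2 ≤ phaseHinfOfInertia D lam2 M := by
    intro M hM
    rw [phaseHinfOfInertia]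
    split_ifs with hb
    · exact f_lb hD hl hM hb
    · exact le_refl _
  refine ⟨?_, ?_, lb, ?_, ?_⟩
  · -- continuity
    have hf : ContinuousOn (f D lam2) (Set.Ioi (D ^ 2 / (4 * lam2))) := by
      apply ContinuousOn.div
      · exact (continuous_const.mul continuous_id |>.mul continuous_const).continuousOn
      · exact (continuous_const.mul (Real.continuous_sqrt.comp
          (by continuity))).continuousOn
      · intro x hx
        have hx' : D ^ 2 / (4 * lam2) < x := hx
        have h4 : 0 < 4 * x * lam2 - D ^ 2 := by
          rw [div_lt_iff₀ (by positivity)] at hx'; nlinarith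
        have := Real.sqrt_pos.mpr h4
        positivity
    have hcomp : ContinuousOn (fun M => f D lam2 (max M (D ^ 2 / (2 * lam2))))
        (Set.Ioi (0:ℝ)) := by
      apply hf.comp (continuous_id.max continuous_const).continuousOn
      intro x _
      have h24 : D ^ 2 / (4 * lam2) < D ^ 2 / (2 * lam2) :=
        div_lt_div_of_pos_left (by positivity) (by positivity) (by linarith)
      exact lt_of_lt_of_le h24 (le_max_right _ _)
    exact hcomp.congr (fun M hM => g_eq_f_max hD hl hM)
  · -- monotonicity
    intro M₁ hM₁ M₂ hM₂ h12
    simp only [Set.mem_Ioi] at hM₁ hM₂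
    rw [phaseHinfOfInertia]
    split_ifs with hb
    · have hb2 : D ^ 2 ≤ 2 * M₂ * lam2 := by nlinarith
      rw [show phaseHinfOfInertia D lam2 M₂ = f D lam2 M₂ from by
        rw [phaseHinfOfInertia, if_pos hb2, f]]
      exact f_mono hD hl hM₁ hb h12
    · exact lb M₂ hM₂
  · -- equality region
    intro M hM hle
    have h2 : 2 * M * lam2 ≤ D ^ 2 := by
      rw [le_div_iff₀ (by positivity)] at hle; linarith
    rw [phaseHinfOfInertia]
    split_ifs with hb
    · exact f_at_boundary hD hl (le_antisymm hb h2)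
    · rfl
  · -- strict region
    intro M hM
    have hMpos : 0 < M := hcpos.trans hM
    have hb : D ^ 2 < 2 * M * lam2 := by
      rw [div_lt_iff₀ (by positivity)] at hM; linarith
    rw [phaseHinfOfInertia, if_pos hb.le]
    exact f_lb_strict hD hl hMpos hb
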